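/- arXiv:2402.08711 — 2 statements merged into one kernel-verified Lean document; each statement's English description precedes it below -/
import Mathlib

section
/- For any 3-tensor A ∈ ℝ^{d×d×d}, ‖A‖_{{1,2}{3}} ≤ √d · ‖A‖_{{1}{2}{3}}. -/
open scoped BigOperators

/-- The `{1}{2}{3}` tensor norm of a 3-tensor. -/
noncomputable def norm123 {d : ℕ} (A : Fin d → Fin d → Fin d → ℝ) : ℝ :=
  sSup {s | ∃ x y z : Fin d → ℝ,
    (∑ i, x i ^ 2) ≤ 1 ∧ (∑ j, y j ^ 2) ≤ 1 ∧ (∑ k, z k ^ 2) ≤ 1 ∧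
    s = ∑ i, ∑ j, ∑ k, A i j k * x i * y j * z k}

/-- The `{1,2}{3}` tensor norm of a 3-tensor. -/
noncomputable def norm12_3 {d : ℕ} (A : Fin d → Fin d → Fin d → ℝ) : ℝ :=
  sSup {s | ∃ (x : Fin d → Fin d → ℝ) (y : Fin d → ℝ),
    (∑ i, ∑ j, x i j ^ 2) ≤ 1 ∧ (∑ k, y k ^ 2) ≤ 1 ∧
    s = ∑ i, ∑ j, ∑ k, A i j k * x i j * y k}

/-- The spectral (operator) norm of a matrix: sup of `‖M y‖` over `‖y‖ ≤ 1`. -/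
noncomputable def opNorm {d : ℕ} (M : Matrix (Fin d) (Fin d) ℝ) : ℝ :=
  sSup {s | ∃ y : Fin d → ℝ, (∑ k, y k ^ 2) ≤ 1 ∧
    s = Real.sqrt (∑ i, (∑ k, M i k * y k) ^ 2)}

/-!
Fix `y` with `‖y‖ ≤ 1` and contract it against the last index, `M i j = ∑ k, A i j k * y k`.
Each column `M · j` is the contraction of `A` with `e_j` and `y`, so testing against unit
vectors bounds its Euclidean norm by `‖A‖_{1}{2}{3}`. Summing the `d` columns gives
`‖M‖_F ≤ √d · ‖A‖_{1}{2}{3}`, and Cauchy–Schwarz bounds `⟨x, M⟩` for every `x` with `‖x‖_F ≤ 1`.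
-/

open Finset

section CauchySchwarz

variable {ι : Type*} [Fintype ι]

lemma abs_le_one_of_sum_sq_le_one {w : ι → ℝ} (hw : ∑ i, w i ^ 2 ≤ 1) (i : ι) :
    |w i| ≤ 1 := by
  have hi : w i ^ 2 ≤ 1 ^ 2 := by
    simpa using (single_le_sum (fun j _ => sq_nonneg (w j)) (mem_univ i)).trans hw
  exact abs_le_of_sq_le_sq hi zero_le_one

lemma sum_mul_le_of_sum_sq_le {x m : ι → ℝ} {B : ℝ} (hB : 0 ≤ B) (hx : ∑ i, x i ^ 2 ≤ 1)
    (hm : ∑ i, m i ^ 2 ≤ B ^ 2) : ∑ i, x i * m i ≤ B := by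
  have hsq : (∑ i, x i * m i) ^ 2 ≤ B ^ 2 :=
    calc (∑ i, x i * m i) ^ 2 ≤ (∑ i, x i ^ 2) * ∑ i, m i ^ 2 := sum_mul_sq_le_sq_mul_sq _ _ _
      _ ≤ 1 * B ^ 2 := mul_le_mul hx hm (sum_nonneg fun i _ => sq_nonneg _) zero_le_one
      _ = B ^ 2 := one_mul _
  exact le_of_abs_le (abs_le_of_sq_le_sq hsq hB)

/-- The hypothesis is tested on the unit vector `m / ‖m‖`. -/
lemma sum_sq_le_of_forall_sum_mul_le {m : ι → ℝ} {B : ℝ}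
    (h : ∀ u : ι → ℝ, ∑ i, u i ^ 2 ≤ 1 → ∑ i, u i * m i ≤ B) : ∑ i, m i ^ 2 ≤ B ^ 2 := by
  rcases (sum_nonneg fun i _ => sq_nonneg (m i)).eq_or_lt with hc | hc
  · rw [← hc]; positivity
  set c := ∑ i, m i ^ 2 with hc_def
  have hsc : 0 < √c := Real.sqrt_pos.mpr hc
  have hu : ∑ i, (m i / √c) ^ 2 = 1 := by
    simp_rw [div_pow, Real.sq_sqrt hc.le, ← sum_div, ← hc_def]
    exact div_self hc.ne'
  have hum : ∑ i, m i / √c * m i = √c := by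
    simp_rw [div_mul_eq_mul_div, ← sq, ← sum_div]
    rw [div_eq_iff hsc.ne', Real.mul_self_sqrt hc.le]
  have hle : √c ≤ B := hum ▸ h _ hu.le
  calc c = √c ^ 2 := (Real.sq_sqrt hc.le).symm
    _ ≤ B ^ 2 := pow_le_pow_left₀ hsc.le hle 2

end CauchySchwarz

section Norm123

variable {d : ℕ} (A : Fin d → Fin d → Fin d → ℝ)

lemma sum_le_norm123 {x y z : Fin d → ℝ} (hx : ∑ i, x i ^ 2 ≤ 1) (hy : ∑ j, y j ^ 2 ≤ 1)
    (hz : ∑ k, z k ^ 2 ≤ 1) : ∑ i, ∑ j, ∑ k, A i j k * x i * y j * z k ≤ norm123 A := by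
  refine le_csSup ⟨∑ i, ∑ j, ∑ k, |A i j k|, ?_⟩ ⟨x, y, z, hx, hy, hz, rfl⟩
  rintro s ⟨x, y, z, hx, hy, hz, rfl⟩
  gcongr with i _ j _ k _
  calc A i j k * x i * y j * z k ≤ |A i j k| * |x i| * |y j| * |z k| := by
        simp only [← abs_mul]; exact le_abs_self _
    _ ≤ |A i j k| * 1 * 1 * 1 := by
        gcongr
        exacts [abs_le_one_of_sum_sq_le_one hx i, abs_le_one_of_sum_sq_le_one hy j,
          abs_le_one_of_sum_sq_le_one hz k]
    _ = |A i j k| := by ring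

lemma norm123_nonneg : 0 ≤ norm123 A := by
  simpa using sum_le_norm123 A (x := 0) (y := 0) (z := 0) (by simp) (by simp) (by simp)

lemma sum_sq_contract_le_norm123_sq (j : Fin d) {y : Fin d → ℝ} (hy : ∑ k, y k ^ 2 ≤ 1) :
    ∑ i, (∑ k, A i j k * y k) ^ 2 ≤ norm123 A ^ 2 := by
  refine sum_sq_le_of_forall_sum_mul_le fun u hu => ?_
  have hj : ∑ j', Pi.single (M := fun _ => ℝ) j 1 j' ^ 2 ≤ 1 := by simp [Pi.single_apply]
  convert sum_le_norm123 A hu hj hy using 2 with i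
  simp [Pi.single_apply, mul_sum, mul_assoc, mul_left_comm]

end Norm123

/-- `‖A‖_{{1,2}{3}} ≤ √d · ‖A‖_{{1}{2}{3}}`. -/
theorem norm12_3_le_sqrt_dim_mul_norm123 {d : ℕ} (A : Fin d → Fin d → Fin d → ℝ) :
    norm12_3 A ≤ Real.sqrt d * norm123 A := by
  have hB : 0 ≤ √d * norm123 A := mul_nonneg (Real.sqrt_nonneg _) (norm123_nonneg A)
  refine Real.sSup_le ?_ hB
  rintro s ⟨x, y, hx, hy, rfl⟩
  set M : Fin d × Fin d → ℝ := fun p => ∑ k, A p.1 p.2 k * y k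
  have hM : ∑ p, M p ^ 2 ≤ (√d * norm123 A) ^ 2 := by
    rw [mul_pow, Real.sq_sqrt d.cast_nonneg, Fintype.sum_prod_type_right]
    simpa using sum_le_sum (s := univ) fun j _ => sum_sq_contract_le_norm123_sq A j hy
  have hxM := sum_mul_le_of_sum_sq_le hB (x := fun p => x p.1 p.2)
    (by simpa only [Fintype.sum_prod_type] using hx) hM
  simpa only [Fintype.sum_prod_type, M, mul_sum, mul_assoc, mul_left_comm] using hxM
end

section
/- Let p ~ N(0, I_d) be a standard d-dimensional Gaussian and A ∈ ℝ^{d×d×d}. Then E[ Σ_k ( Σ_{i,j} A_{ijk} p_i p_j )² ] ≤ 3d · ‖A‖²_{{1,2}{3}}. -/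
open scoped BigOperators

/-!
Expanding the square turns the expectation into a combination of fourth moments
`E[pᵢ pⱼ pₐ p_b] = δᵢⱼ δₐ_b + δᵢₐ δⱼ_b + δᵢ_b δⱼₐ` (Isserlis), so that for each slice `Mₖ = A[·,·,k]`
`E[(pᵀ Mₖ p)²] = (tr Mₖ)² + ‖Mₖ‖_F² + tr (Mₖ Mₖ)`, and the last term is at most `‖Mₖ‖_F²`.
Testing the definition of `‖A‖_{{1,2}{3}}` against `x = Mₖ`, `y = eₖ` gives `‖Mₖ‖_F ≤ ‖A‖`, and
against `x = I`, `y = (tr Mₖ)ₖ` gives `∑ₖ (tr Mₖ)² ≤ d ‖A‖²`.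
-/

open MeasureTheory ProbabilityTheory Real Finset
open scoped NNReal Nat

lemma integrable_pow_gaussianReal (μ : ℝ) (v : ℝ≥0) (n : ℕ) :
    Integrable (fun x : ℝ ↦ x ^ n) (gaussianReal μ v) :=
  ((memLp_id_gaussianReal n).integrable_norm_pow').mono' (by fun_prop)
    (ae_of_all _ fun x ↦ by simp [norm_pow])

lemma integral_pow_gaussianReal_of_odd (v : ℝ≥0) {n : ℕ} (hn : Odd n) :
    ∫ x, x ^ n ∂gaussianReal 0 v = 0 := by
  have h := integral_map (μ := gaussianReal 0 v) (f := fun x : ℝ ↦ x ^ n)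
    (measurable_neg (G := ℝ)).aemeasurable (by fun_prop)
  rw [gaussianReal_map_neg, neg_zero] at h
  simp only [hn.neg_pow, integral_neg] at h
  linarith

lemma integral_pow_two_mul_gaussianReal (k : ℕ) :
    ∫ x, x ^ (2 * k) ∂gaussianReal 0 1 = (2 * k - 1 : ℕ)‼ := by
  set f : ℝ → ℝ := fun t ↦ t ^ ((2 * k : ℕ) : ℝ) * rexp (-(1 / 2) * t ^ (2 : ℝ))
  have hf : ∀ x, gaussianPDFReal 0 1 x • x ^ (2 * k) = (√(2 * π))⁻¹ * f |x| := fun x ↦ by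
    simp only [f, gaussianPDFReal, rpow_natCast, rpow_two, sq_abs, smul_eq_mul,
      (even_two_mul k).pow_abs, NNReal.coe_one]
    ring_nf
  have hq : (-1 : ℝ) < (2 * k : ℕ) := neg_one_lt_zero.trans_le (Nat.cast_nonneg _)
  have hΓ : Gamma (((2 * k : ℕ) + 1 : ℝ) / 2) = (2 * k - 1 : ℕ)‼ * √π / 2 ^ k := by
    rw [← Gamma_nat_add_half]; push_cast; ring_nf
  have hpow : (1 / 2 : ℝ) ^ (-((2 * k : ℕ) + 1 : ℝ) / 2) = 2 ^ k * √2 := by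
    rw [one_div, inv_rpow zero_le_two, ← rpow_neg zero_le_two,
      show -(-((2 * k : ℕ) + 1 : ℝ) / 2) = k + 1 / 2 by push_cast; ring,
      rpow_add two_pos, rpow_natCast, sqrt_eq_rpow]
  rw [integral_gaussianReal_eq_integral_smul one_ne_zero, funext hf, integral_const_mul,
    integral_comp_abs, integral_rpow_mul_exp_neg_mul_rpow two_pos hq one_half_pos, hΓ, hpow,
    sqrt_mul zero_le_two]
  field_simp

lemma Multiset.prod_map_eq_prod_pow_count {ι M : Type*} [Fintype ι] [DecidableEq ι]
    [CommMonoid M] (s : Multiset ι) (f : ι → M) : (s.map f).prod = ∏ c, f c ^ s.count c := by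
  rw [Finset.prod_multiset_map_count]
  exact prod_subset (subset_univ _) fun c _ hc ↦ by simp_all

lemma mul_mul_mul_eq_multiset_prod {ι : Type*} (p : ι → ℝ) (i j a b : ι) :
    p i * p j * p a * p b = (({i, j, a, b} : Multiset ι).map p).prod := by
  simp [mul_assoc]

lemma sq_sum_mul_mul {ι R : Type*} [Fintype ι] [CommSemiring R] (M : ι → ι → R) (p : ι → R) :
    (∑ i, ∑ j, M i j * p i * p j) ^ 2 =
      ∑ i, ∑ j, ∑ a, ∑ b, M i j * M a b * (p i * p j * p a * p b) := by
  simp only [sq, sum_mul, mul_sum]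
  exact sum_congr rfl fun i _ ↦ sum_congr rfl fun j _ ↦ sum_congr rfl fun a _ ↦
    sum_congr rfl fun b _ ↦ by ring

lemma sum_mul_swap_le_sum_sq {ι : Type*} [Fintype ι] (M : ι → ι → ℝ) :
    ∑ i, ∑ j, M i j * M j i ≤ ∑ i, ∑ j, M i j ^ 2 := by
  calc ∑ i, ∑ j, M i j * M j i ≤ ∑ i, ∑ j, (M i j ^ 2 + M j i ^ 2) / 2 := by
        gcongr with i _ j _
        nlinarith [sq_nonneg (M i j - M j i)]
    _ = ((∑ i, ∑ j, M i j ^ 2) + ∑ i, ∑ j, M j i ^ 2) / 2 := by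
        simp only [← sum_div, sum_add_distrib]
    _ = ∑ i, ∑ j, M i j ^ 2 := by rw [sum_comm (f := fun i j ↦ M j i ^ 2)]; ring

section StandardGaussianVector

variable {ι : Type*} [Fintype ι] [DecidableEq ι]

lemma integrable_multiset_prod_pi_gaussianReal (s : Multiset ι) :
    Integrable (fun p : ι → ℝ ↦ (s.map p).prod) (Measure.pi fun _ ↦ gaussianReal 0 1) := by
  simp_rw [Multiset.prod_map_eq_prod_pow_count]
  exact Integrable.fintype_prod fun c ↦ integrable_pow_gaussianReal 0 1 (s.count c)

lemma integral_multiset_prod_pi_gaussianReal (s : Multiset ι) :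
    ∫ p : ι → ℝ, (s.map p).prod ∂(Measure.pi fun _ ↦ gaussianReal 0 1) =
      ∏ c, ∫ x, x ^ s.count c ∂gaussianReal 0 1 := by
  simp_rw [Multiset.prod_map_eq_prod_pow_count]
  exact integral_fintype_prod_eq_prod fun c (x : ℝ) ↦ x ^ s.count c

lemma integrable_mul_mul_mul_pi_gaussianReal (i j a b : ι) :
    Integrable (fun p : ι → ℝ ↦ p i * p j * p a * p b)
      (Measure.pi fun _ ↦ gaussianReal 0 1) := by
  simp_rw [mul_mul_mul_eq_multiset_prod]
  exact integrable_multiset_prod_pi_gaussianReal _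

lemma integral_mul_mul_mul_pi_gaussianReal (i j a b : ι) :
    ∫ p : ι → ℝ, p i * p j * p a * p b ∂(Measure.pi fun _ ↦ gaussianReal 0 1) =
      (if i = j then 1 else 0) * (if a = b then 1 else 0) +
        (if i = a then 1 else 0) * (if j = b then 1 else 0) +
        (if i = b then 1 else 0) * (if j = a then 1 else 0) := by
  have m2 : ∫ x, x ^ 2 ∂gaussianReal 0 1 = 1 := by
    simpa using integral_pow_two_mul_gaussianReal 1
  have m3 : ∫ x, x ^ 3 ∂gaussianReal 0 1 = 0 := integral_pow_gaussianReal_of_odd 1 (by decide)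
  have m4 : ∫ x, x ^ 4 ∂gaussianReal 0 1 = 3 := by
    simpa using integral_pow_two_mul_gaussianReal 2
  simp_rw [mul_mul_mul_eq_multiset_prod, integral_multiset_prod_pi_gaussianReal]
  rw [← prod_subset (subset_univ {i, j, a, b}) fun c _ hc ↦ by simp_all]
  by_cases hij : i = j <;> by_cases hia : i = a <;> by_cases hib : i = b <;>
    by_cases hja : j = a <;> by_cases hjb : j = b <;> by_cases hab : a = b <;>
    subst_vars <;> simp [prod_insert, Multiset.count_cons, Ne.symm, *] <;> norm_num

lemma integrable_sq_sum_mul_mul_pi_gaussianReal (M : ι → ι → ℝ) :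
    Integrable (fun p : ι → ℝ ↦ (∑ i, ∑ j, M i j * p i * p j) ^ 2)
      (Measure.pi fun _ ↦ gaussianReal 0 1) := by
  have := integrable_mul_mul_mul_pi_gaussianReal (ι := ι)
  simp_rw [sq_sum_mul_mul]
  fun_prop

lemma integral_sq_sum_mul_mul_pi_gaussianReal (M : ι → ι → ℝ) :
    ∫ p : ι → ℝ, (∑ i, ∑ j, M i j * p i * p j) ^ 2 ∂(Measure.pi fun _ ↦ gaussianReal 0 1) =
      (∑ i, M i i) ^ 2 + ∑ i, ∑ j, M i j ^ 2 + ∑ i, ∑ j, M i j * M j i := by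
  have := integrable_mul_mul_mul_pi_gaussianReal (ι := ι)
  simp_rw [sq_sum_mul_mul]
  simp (disch := intros; fun_prop) only [integral_finsetSum, integral_const_mul,
    integral_mul_mul_mul_pi_gaussianReal]
  simp [mul_add, sum_add_distrib, sq, sum_mul_sum]

end StandardGaussianVector

lemma le_sq_of_le_mul_sqrt {S C : ℝ} (h : 0 < S → S ≤ C * √S) : S ≤ C ^ 2 := by
  rcases le_or_gt S 0 with hS | hS
  · exact hS.trans (sq_nonneg C)
  have hroot : √S ≤ C := le_of_mul_le_mul_right (by nlinarith [sq_sqrt hS.le, h hS])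
    (sqrt_pos.mpr hS)
  calc S = √S ^ 2 := (sq_sqrt hS.le).symm
    _ ≤ C ^ 2 := pow_le_pow_left₀ (sqrt_nonneg S) hroot 2

section norm12_3

variable {d : ℕ} (A : Fin d → Fin d → Fin d → ℝ)

lemma le_norm12_3 {x : Fin d → Fin d → ℝ} {y : Fin d → ℝ} (hx : ∑ i, ∑ j, x i j ^ 2 ≤ 1)
    (hy : ∑ k, y k ^ 2 ≤ 1) : ∑ i, ∑ j, ∑ k, A i j k * x i j * y k ≤ norm12_3 A := by
  refine le_csSup ⟨∑ i, ∑ j, ∑ k, |A i j k|, ?_⟩ ⟨x, y, hx, hy, rfl⟩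
  rintro _ ⟨x, y, hx, hy, rfl⟩
  have hx1 : ∀ i j, |x i j| ≤ 1 := fun i j ↦ sq_le_one_iff_abs_le_one _ |>.mp <|
    (single_le_sum (fun j _ ↦ sq_nonneg (x i j)) (mem_univ j)).trans <|
      (single_le_sum (fun i _ ↦ sum_nonneg fun j _ ↦ sq_nonneg (x i j)) (mem_univ i)).trans hx
  have hy1 : ∀ k, |y k| ≤ 1 := fun k ↦ sq_le_one_iff_abs_le_one _ |>.mp <|
    (single_le_sum (fun k _ ↦ sq_nonneg (y k)) (mem_univ k)).trans hy
  gcongr with i _ j _ k _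
  calc A i j k * x i j * y k ≤ |A i j k| * |x i j| * |y k| := by
        rw [← abs_mul, ← abs_mul]; exact le_abs_self _
    _ ≤ |A i j k| * 1 * 1 := by gcongr <;> simp [hx1, hy1]
    _ = |A i j k| := by ring

lemma sum_mul_le_norm12_3_mul {x : Fin d → Fin d → ℝ} {y : Fin d → ℝ} {a b : ℝ}
    (ha : 0 < a) (hb : 0 < b) (hx : ∑ i, ∑ j, x i j ^ 2 ≤ a ^ 2) (hy : ∑ k, y k ^ 2 ≤ b ^ 2) :
    ∑ i, ∑ j, ∑ k, A i j k * x i j * y k ≤ norm12_3 A * a * b := by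
  have h := le_norm12_3 A (x := fun i j ↦ x i j / a) (y := fun k ↦ y k / b)
    (by simpa [div_pow, ← sum_div] using div_le_one_of_le₀ hx (by positivity))
    (by simpa [div_pow, ← sum_div] using div_le_one_of_le₀ hy (by positivity))
  have hscale : ∑ i, ∑ j, ∑ k, A i j k * (x i j / a) * (y k / b) =
      (∑ i, ∑ j, ∑ k, A i j k * x i j * y k) / (a * b) := by
    simp only [sum_div]
    exact sum_congr rfl fun i _ ↦ sum_congr rfl fun j _ ↦ sum_congr rfl fun k _ ↦ by
      field_simp
  rw [hscale, div_le_iff₀ (by positivity)] at h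
  linarith

lemma sum_sq_slice_le_norm12_3_sq (k : Fin d) : ∑ i, ∑ j, A i j k ^ 2 ≤ norm12_3 A ^ 2 := by
  refine le_sq_of_le_mul_sqrt fun hS ↦ ?_
  have h := sum_mul_le_norm12_3_mul A (x := fun i j ↦ A i j k) (y := Pi.single k 1)
    (sqrt_pos.mpr hS) one_pos (sq_sqrt hS.le).ge (by simp [Pi.single_apply])
  simpa [Pi.single_apply, sq] using h

lemma sum_sq_trace_le_card_mul_norm12_3_sq :
    ∑ k, (∑ i, A i i k) ^ 2 ≤ d * norm12_3 A ^ 2 := by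
  rw [← sq_sqrt (Nat.cast_nonneg d), ← mul_pow, mul_comm]
  refine le_sq_of_le_mul_sqrt fun hV ↦ ?_
  obtain ⟨k₀, -⟩ := Finset.exists_ne_zero_of_sum_ne_zero hV.ne'
  have h := sum_mul_le_norm12_3_mul A (x := fun i j ↦ if i = j then 1 else 0)
    (y := fun k ↦ ∑ i, A i i k) (sqrt_pos.mpr (Nat.cast_pos.mpr k₀.pos)) (sqrt_pos.mpr hV)
    (by simp [sq_sqrt]) (sq_sqrt hV.le).ge
  convert h using 1
  simp [sum_ite_irrel, sum_mul, sq]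
  exact sum_comm

end norm12_3

open MeasureTheory ProbabilityTheory in
/-- Gaussian chaos bound: for `p ~ N(0, I_d)`,
`E[ Σ_k ( Σ_{i,j} A_{ijk} p_i p_j )² ] ≤ 3 d ‖A‖²_{{1,2}{3}}`. -/
theorem gaussian_chaos_bound {d : ℕ} (A : Fin d → Fin d → Fin d → ℝ) :
    ∫ p : Fin d → ℝ, (∑ k, (∑ i, ∑ j, A i j k * p i * p j) ^ 2)
        ∂(Measure.pi fun _ : Fin d => gaussianReal 0 1) ≤
      3 * d * norm12_3 A ^ 2 := by
  rw [integral_finsetSum _ fun k _ ↦ integrable_sq_sum_mul_mul_pi_gaussianReal _]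
  simp_rw [integral_sq_sum_mul_mul_pi_gaussianReal]
  calc ∑ k, ((∑ i, A i i k) ^ 2 + ∑ i, ∑ j, A i j k ^ 2 + ∑ i, ∑ j, A i j k * A j i k)
      ≤ ∑ k, ((∑ i, A i i k) ^ 2 + 2 * ∑ i, ∑ j, A i j k ^ 2) := by
        refine sum_le_sum fun k _ ↦ ?_
        linarith [sum_mul_swap_le_sum_sq fun i j ↦ A i j k]
    _ = ∑ k, (∑ i, A i i k) ^ 2 + 2 * ∑ k, ∑ i, ∑ j, A i j k ^ 2 := by
        rw [sum_add_distrib, mul_sum]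
    _ ≤ d * norm12_3 A ^ 2 + 2 * ∑ _k : Fin d, norm12_3 A ^ 2 := by
        gcongr with k _
        · exact sum_sq_trace_le_card_mul_norm12_3_sq A
        · exact sum_sq_slice_le_norm12_3_sq A k
    _ = 3 * d * norm12_3 A ^ 2 := by simp only [sum_const, card_univ, Fintype.card_fin, nsmul_eq_mul]; ring
end
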